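/- arXiv:2105.13063 — 4 statements merged into one kernel-verified Lean document; each statement's English description precedes it below -/
import Mathlib

section
/- The integral operator 𝒦 on L_p(𝔻) defined by 𝒦[φ](z) = (1/π)∫_𝔻 (1/(ζ−z) + z̄/(1−ζz̄)) φ(ζ) dμ(ζ) is a bounded linear operator from L_p(𝔻) to L_p(𝔻) for every p > 1. -/
/-!
Both summands of the kernel are dominated by the Newtonian singularity: for `z, ζ` in the disk,
`|1 - ζ z̄|² - |ζ - z|² = (1 - |ζ|²)(1 - |z|²) ≥ 0`, so `|K(z, ζ)| ≤ 2 / |ζ - z|`. Since `1 / |u|` is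
integrable near the origin of the plane, the rows and the columns of `|K|` have uniformly bounded
integrals over the disk, and Schur's test gives boundedness on every `L_p`, `1 < p < ∞`.
-/

open Complex Metric Set MeasureTheory ComplexConjugate Real

noncomputable section

/-- The open unit disk in `ℂ`. -/
def unitDisk : Set ℂ := Metric.ball 0 1

/-- The integral operator
`𝒦[φ](z) = (1/π) ∫_𝔻 (1/(ζ−z) + z̄/(1−ζz̄)) φ(ζ) dμ(ζ)` (μ planar Lebesgue measure). -/
def greenOp (φ : ℂ → ℂ) (z : ℂ) : ℂ :=
  (1 / (Real.pi : ℂ)) *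
    ∫ ζ in unitDisk, (1 / (ζ - z) + conj z / (1 - ζ * conj z)) * φ ζ

open Function
open scoped ENNReal

theorem integral_kernel_smul_congr_ae {α β 𝕜 E : Type*} [MeasurableSpace β] {ν : Measure β}
    [NormedAddCommGroup E] [NormedSpace ℝ E] [SMul 𝕜 E] (K : α → β → 𝕜) {g g' : β → E}
    (h : g =ᵐ[ν] g') :
    (fun x => ∫ y, K x y • g y ∂ν) = fun x => ∫ y, K x y • g' y ∂ν :=
  funext fun x => integral_congr_ae (h.mono fun y hy => congrArg (K x y • ·) hy)

section SchurTest

variable {α β : Type*} [MeasurableSpace α] [MeasurableSpace β] {μ : Measure α} {ν : Measure β}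
  {p q : ℝ}

theorem ENNReal.lintegral_mul_rpow_le (hpq : p.HolderConjugate q) {w f : α → ℝ≥0∞}
    (hw : AEMeasurable w μ) (hf : AEMeasurable f μ) :
    (∫⁻ a, w a * f a ∂μ) ^ p ≤ (∫⁻ a, w a ∂μ) ^ (p / q) * ∫⁻ a, w a * f a ^ p ∂μ := by
  have hp := hpq.pos
  have hq := hpq.symm.pos
  -- Hölder for the splitting `w f = (w ^ (1/p) f) (w ^ (1/q))`
  have holder := ENNReal.lintegral_mul_le_Lp_mul_Lq μ hpq
    ((hw.pow_const p⁻¹).mul hf) (hw.pow_const q⁻¹)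
  have hsplit : ∀ a, (fun a => w a ^ p⁻¹ * f a) a * w a ^ q⁻¹ = w a * f a := fun a => by
    rw [mul_right_comm, ← ENNReal.rpow_add_of_nonneg _ _ (by positivity) (by positivity),
      hpq.inv_add_inv_eq_one, ENNReal.rpow_one]
  simp only [Pi.mul_apply, hsplit, ENNReal.mul_rpow_of_nonneg _ _ hp.le,
    ENNReal.rpow_inv_rpow hp.ne', ENNReal.rpow_inv_rpow hq.ne'] at holder
  calc (∫⁻ a, w a * f a ∂μ) ^ p
      ≤ ((∫⁻ a, w a * f a ^ p ∂μ) ^ (1 / p) * (∫⁻ a, w a ∂μ) ^ (1 / q)) ^ p := by gcongr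
    _ = (∫⁻ a, w a ∂μ) ^ (p / q) * ∫⁻ a, w a * f a ^ p ∂μ := by
      rw [ENNReal.mul_rpow_of_nonneg _ _ hp.le, ← ENNReal.rpow_mul, ← ENNReal.rpow_mul,
        one_div_mul_cancel hp.ne', ENNReal.rpow_one, mul_comm, one_div_mul_eq_div]

theorem lintegral_rpow_lintegral_mul_le [SFinite μ] [SFinite ν] (hpq : p.HolderConjugate q)
    {k : α → β → ℝ≥0∞} (hk : Measurable (uncurry k)) {f : β → ℝ≥0∞} (hf : Measurable f)
    {A B : ℝ≥0∞} (hA : ∀ᵐ x ∂μ, ∫⁻ y, k x y ∂ν ≤ A) (hB : ∀ᵐ y ∂ν, ∫⁻ x, k x y ∂μ ≤ B) :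
    ∫⁻ x, (∫⁻ y, k x y * f y ∂ν) ^ p ∂μ ≤ A ^ (p / q) * B * ∫⁻ y, f y ^ p ∂ν := by
  have hkf : Measurable fun z : α × β => k z.1 z.2 * f z.2 ^ p :=
    hk.mul ((hf.pow_const p).comp measurable_snd)
  have hkf_left : Measurable fun x => ∫⁻ y, k x y * f y ^ p ∂ν := hkf.lintegral_prod_right'
  calc ∫⁻ x, (∫⁻ y, k x y * f y ∂ν) ^ p ∂μ
      ≤ ∫⁻ x, A ^ (p / q) * ∫⁻ y, k x y * f y ^ p ∂ν ∂μ := by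
        refine lintegral_mono_ae (hA.mono fun x hx => ?_)
        refine (ENNReal.lintegral_mul_rpow_le hpq ?_ hf.aemeasurable).trans ?_
        · exact (hk.comp measurable_prodMk_left).aemeasurable
        · gcongr
          exact div_nonneg hpq.nonneg hpq.symm.nonneg
    _ = A ^ (p / q) * ∫⁻ y, (∫⁻ x, k x y ∂μ) * f y ^ p ∂ν := by
        rw [lintegral_const_mul _ hkf_left, lintegral_lintegral_swap hkf.aemeasurable]
        congr 1
        exact lintegral_congr fun y => lintegral_mul_const _ (hk.comp measurable_prodMk_right)
    _ ≤ A ^ (p / q) * ∫⁻ y, B * f y ^ p ∂ν := by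
        gcongr _ * ?_
        exact lintegral_mono_ae (hB.mono fun y hy => by gcongr)
    _ = A ^ (p / q) * B * ∫⁻ y, f y ^ p ∂ν := by
        rw [lintegral_const_mul _ (hf.pow_const p), mul_assoc]

variable {𝕜 E : Type*} [NontriviallyNormedField 𝕜] [NormedAddCommGroup E] [NormedSpace ℝ E]
  [NormedSpace 𝕜 E] {K : α → β → 𝕜} {A B : ℝ≥0∞}

theorem eLpNorm_integral_kernel_smul_le [SFinite μ] [SFinite ν] (hpq : p.HolderConjugate q)
    (hK : StronglyMeasurable (uncurry K)) (hA : ∀ᵐ x ∂μ, ∫⁻ y, ‖K x y‖ₑ ∂ν ≤ A)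
    (hB : ∀ᵐ y ∂ν, ∫⁻ x, ‖K x y‖ₑ ∂μ ≤ B) {g : β → E} (hg : AEStronglyMeasurable g ν) :
    eLpNorm (fun x => ∫ y, K x y • g y ∂ν) (ENNReal.ofReal p) μ ≤
      A ^ q⁻¹ * B ^ p⁻¹ * eLpNorm g (ENNReal.ofReal p) ν := by
  have hp := hpq.pos
  have hp0 : ENNReal.ofReal p ≠ 0 := by simpa using hp
  rw [integral_kernel_smul_congr_ae K hg.ae_eq_mk, eLpNorm_congr_ae hg.ae_eq_mk,
    eLpNorm_eq_lintegral_rpow_enorm_toReal hp0 ENNReal.ofReal_ne_top,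
    eLpNorm_eq_lintegral_rpow_enorm_toReal hp0 ENNReal.ofReal_ne_top, ENNReal.toReal_ofReal hp.le]
  calc (∫⁻ x, ‖∫ y, K x y • hg.mk g y ∂ν‖ₑ ^ p ∂μ) ^ (1 / p)
      ≤ (∫⁻ x, (∫⁻ y, ‖K x y‖ₑ * ‖hg.mk g y‖ₑ ∂ν) ^ p ∂μ) ^ (1 / p) := by
        gcongr with x
        simpa only [enorm_smul] using enorm_integral_le_lintegral_enorm (μ := ν)
          fun y => K x y • hg.mk g y
    _ ≤ (A ^ (p / q) * B * ∫⁻ y, ‖hg.mk g y‖ₑ ^ p ∂ν) ^ (1 / p) := by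
        gcongr
        exact lintegral_rpow_lintegral_mul_le hpq hK.enorm hg.stronglyMeasurable_mk.enorm hA hB
    _ = A ^ q⁻¹ * B ^ p⁻¹ * (∫⁻ y, ‖hg.mk g y‖ₑ ^ p ∂ν) ^ (1 / p) := by
        rw [ENNReal.mul_rpow_of_nonneg _ _ (by positivity),
          ENNReal.mul_rpow_of_nonneg _ _ (by positivity), ← ENNReal.rpow_mul, one_div,
          div_mul_eq_mul_div, mul_inv_cancel₀ hp.ne', one_div]

theorem MeasureTheory.MemLp.integral_kernel_smul [SFinite μ] [SFinite ν] (hpq : p.HolderConjugate q)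
    (hK : StronglyMeasurable (uncurry K)) (hA : ∀ᵐ x ∂μ, ∫⁻ y, ‖K x y‖ₑ ∂ν ≤ A)
    (hB : ∀ᵐ y ∂ν, ∫⁻ x, ‖K x y‖ₑ ∂μ ≤ B) (hA_top : A ≠ ⊤) (hB_top : B ≠ ⊤) {g : β → E}
    (hg : MemLp g (ENNReal.ofReal p) ν) :
    MemLp (fun x => ∫ y, K x y • g y ∂ν) (ENNReal.ofReal p) μ := by
  have hg_meas := hg.aestronglyMeasurable
  have := hpq.pos
  have := hpq.symm.pos
  refine ⟨?_, (eLpNorm_integral_kernel_smul_le hpq hK hA hB hg_meas).trans_lt ?_⟩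
  · rw [integral_kernel_smul_congr_ae K hg_meas.ae_eq_mk]
    exact (hK.smul (hg_meas.stronglyMeasurable_mk.comp_measurable measurable_snd))
      |>.integral_prod_right'.aestronglyMeasurable
  · exact ENNReal.mul_lt_top (ENNReal.mul_lt_top
      (ENNReal.rpow_lt_top_of_nonneg (by positivity) hA_top)
      (ENNReal.rpow_lt_top_of_nonneg (by positivity) hB_top)) hg.eLpNorm_lt_top

end SchurTest

theorem lintegral_ball_enorm_inv_lt_top {E : Type*} [NormedAddCommGroup E] [NormedSpace ℝ E]
    [FiniteDimensional ℝ E] [MeasurableSpace E] [BorelSpace E] {μ : Measure E}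
    [μ.IsAddHaarMeasure] (hd : 1 < Module.finrank ℝ E) (r : ℝ) :
    ∫⁻ x in ball 0 r, ‖x‖ₑ⁻¹ ∂μ < ⊤ := by
  have : Nontrivial E := Module.nontrivial_of_finrank_pos (R := ℝ) (by omega)
  have hint : IntegrableOn (fun x : E => ‖x‖⁻¹) (ball 0 r) μ :=
    integrableOn_ball_of_norm_le_rpow (C := 1) (α := 1) hd.le (by exact_mod_cast hd)
      (ae_of_all _ fun x => by simp [Real.rpow_neg_one]) (by fun_prop)
  have hinv : ∀ᵐ x ∂μ.restrict (ball 0 r), ‖‖x‖⁻¹‖ₑ = ‖x‖ₑ⁻¹ :=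
    ae_restrict_of_ae ((Measure.ae_ne μ 0).mono fun x hx => by
      rw [enorm_inv (norm_ne_zero_iff.2 hx), enorm_norm])
  rw [← lintegral_congr_ae hinv]
  exact hint.2

theorem setLIntegral_ball_comp_sub {E : Type*} [NormedAddCommGroup E] [MeasurableSpace E]
    [BorelSpace E] {μ : Measure E} [μ.IsAddRightInvariant] (f : E → ℝ≥0∞) (w : E) (r : ℝ) :
    ∫⁻ x in ball w r, f (x - w) ∂μ = ∫⁻ x in ball 0 r, f x ∂μ := by
  have hpre : (· - w) ⁻¹' ball (0 : E) r = ball w r := by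
    ext x
    simp [dist_eq_norm]
  rw [← hpre]
  exact (measurePreserving_sub_right μ w).setLIntegral_comp_preimage_emb
    (measurableEmbedding_subRight w) f _

theorem Complex.norm_sub_le_norm_one_sub_mul_conj {z w : ℂ} (hz : ‖z‖ ≤ 1) (hw : ‖w‖ ≤ 1) :
    ‖w - z‖ ≤ ‖1 - w * conj z‖ := by
  have hdiff : ‖1 - w * conj z‖ ^ 2 - ‖w - z‖ ^ 2 = (1 - ‖w‖ ^ 2) * (1 - ‖z‖ ^ 2) := by
    simp only [Complex.sq_norm, Complex.normSq_apply, sub_re, sub_im, mul_re, mul_im, conj_re,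
      conj_im, one_re, one_im]
    ring
  have hnonneg : 0 ≤ (1 - ‖w‖ ^ 2) * (1 - ‖z‖ ^ 2) :=
    mul_nonneg (by nlinarith [norm_nonneg w]) (by nlinarith [norm_nonneg z])
  exact (pow_le_pow_iff_left₀ (norm_nonneg _) (norm_nonneg _) two_ne_zero).1 (by linarith)

def greenKernel (z ζ : ℂ) : ℂ := 1 / (ζ - z) + conj z / (1 - ζ * conj z)

theorem measurable_greenKernel : Measurable (uncurry greenKernel) := by
  unfold greenKernel uncurry
  fun_prop

-- On the diagonal the right-hand side is `0⁻¹ = ⊤`, so no case is excluded.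
theorem enorm_greenKernel_le {z ζ : ℂ} (hz : z ∈ unitDisk) (hζ : ζ ∈ unitDisk) :
    ‖greenKernel z ζ‖ₑ ≤ 2 * ‖ζ - z‖ₑ⁻¹ := by
  rw [unitDisk, mem_ball_zero_iff] at hz hζ
  rcases eq_or_ne ζ z with rfl | hne
  · simp
  have hsub : ζ - z ≠ 0 := sub_ne_zero.2 hne
  have hden : ‖ζ - z‖ ≤ ‖1 - ζ * conj z‖ :=
    Complex.norm_sub_le_norm_one_sub_mul_conj hz.le hζ.le
  have hden0 : 1 - ζ * conj z ≠ 0 := norm_pos_iff.1 ((norm_pos_iff.2 hsub).trans_le hden)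
  calc ‖greenKernel z ζ‖ₑ ≤ ‖1 / (ζ - z)‖ₑ + ‖conj z / (1 - ζ * conj z)‖ₑ := enorm_add_le _ _
    _ ≤ ‖ζ - z‖ₑ⁻¹ + 1 * ‖ζ - z‖ₑ⁻¹ := by
      rw [one_div, enorm_inv hsub, div_eq_mul_inv, enorm_mul, enorm_inv hden0, RCLike.enorm_conj]
      gcongr
      · simpa using enorm_le_iff_norm_le (y := (1 : ℂ)) |>.2 (hz.le.trans_eq norm_one.symm)
      · exact enorm_le_iff_norm_le.2 hden
    _ = 2 * ‖ζ - z‖ₑ⁻¹ := by rw [one_mul, two_mul]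

theorem setLIntegral_unitDisk_enorm_sub_inv_le {w : ℂ} (hw : w ∈ unitDisk) :
    ∫⁻ ζ in unitDisk, ‖ζ - w‖ₑ⁻¹ ≤ ∫⁻ u in ball (0 : ℂ) 2, ‖u‖ₑ⁻¹ := by
  rw [← setLIntegral_ball_comp_sub (fun u => ‖u‖ₑ⁻¹) w 2]
  refine lintegral_mono_set fun ζ hζ => ?_
  rw [unitDisk, mem_ball_zero_iff] at hw hζ
  rw [mem_ball, dist_eq_norm]
  calc ‖ζ - w‖ ≤ ‖ζ‖ + ‖w‖ := norm_sub_le _ _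
    _ < 2 := by linarith

theorem setLIntegral_enorm_greenKernel_le_left {z : ℂ} (hz : z ∈ unitDisk) :
    ∫⁻ ζ in unitDisk, ‖greenKernel z ζ‖ₑ ≤ 2 * ∫⁻ u in ball (0 : ℂ) 2, ‖u‖ₑ⁻¹ :=
  calc ∫⁻ ζ in unitDisk, ‖greenKernel z ζ‖ₑ
      ≤ ∫⁻ ζ in unitDisk, 2 * ‖ζ - z‖ₑ⁻¹ :=
        setLIntegral_mono (by fun_prop) fun ζ hζ => enorm_greenKernel_le hz hζ
    _ ≤ 2 * ∫⁻ u in ball (0 : ℂ) 2, ‖u‖ₑ⁻¹ := by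
        rw [lintegral_const_mul _ (by fun_prop)]
        gcongr 2 * ?_
        exact setLIntegral_unitDisk_enorm_sub_inv_le hz

theorem setLIntegral_enorm_greenKernel_le_right {ζ : ℂ} (hζ : ζ ∈ unitDisk) :
    ∫⁻ z in unitDisk, ‖greenKernel z ζ‖ₑ ≤ 2 * ∫⁻ u in ball (0 : ℂ) 2, ‖u‖ₑ⁻¹ :=
  calc ∫⁻ z in unitDisk, ‖greenKernel z ζ‖ₑ
      ≤ ∫⁻ z in unitDisk, 2 * ‖z - ζ‖ₑ⁻¹ :=
        setLIntegral_mono (by fun_prop) fun z hz => by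
          simpa only [enorm_sub_rev] using enorm_greenKernel_le hz hζ
    _ ≤ 2 * ∫⁻ u in ball (0 : ℂ) 2, ‖u‖ₑ⁻¹ := by
        rw [lintegral_const_mul _ (by fun_prop)]
        gcongr 2 * ?_
        exact setLIntegral_unitDisk_enorm_sub_inv_le hζ

theorem greenOp_eq (φ : ℂ → ℂ) :
    greenOp φ = (1 / (π : ℂ)) • fun z => ∫ ζ in unitDisk, greenKernel z ζ • φ ζ :=
  rfl

/-- For every `p > 1`, the operator `𝒦` is a bounded (linear) operator from
`L_p(𝔻)` to `L_p(𝔻)`. -/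
theorem greenOp_bounded (p : ℝ) (hp : 1 < p) :
    ∃ C : ℝ, 0 ≤ C ∧ ∀ φ : ℂ → ℂ,
      MemLp φ (ENNReal.ofReal p) (volume.restrict unitDisk) →
        MemLp (greenOp φ) (ENNReal.ofReal p) (volume.restrict unitDisk) ∧
        eLpNorm (greenOp φ) (ENNReal.ofReal p) (volume.restrict unitDisk) ≤
          ENNReal.ofReal C * eLpNorm φ (ENNReal.ofReal p) (volume.restrict unitDisk) := by
  obtain ⟨q, hpq⟩ : ∃ q, p.HolderConjugate q := ⟨_, .conjExponent hp⟩
  set A := 2 * ∫⁻ u in ball (0 : ℂ) 2, ‖u‖ₑ⁻¹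
  have hA_top : A ≠ ⊤ := ENNReal.mul_ne_top ENNReal.ofNat_ne_top
    (lintegral_ball_enorm_inv_lt_top (by simp) 2).ne
  have hrow : ∀ᵐ z ∂volume.restrict unitDisk, ∫⁻ ζ in unitDisk, ‖greenKernel z ζ‖ₑ ≤ A :=
    ae_restrict_of_forall_mem measurableSet_ball fun z => setLIntegral_enorm_greenKernel_le_left
  have hcol : ∀ᵐ ζ ∂volume.restrict unitDisk, ∫⁻ z in unitDisk, ‖greenKernel z ζ‖ₑ ≤ A :=
    ae_restrict_of_forall_mem measurableSet_ball fun ζ => setLIntegral_enorm_greenKernel_le_right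
  have hA_pow : A ^ q⁻¹ * A ^ p⁻¹ = A := by
    rw [← ENNReal.rpow_add_of_nonneg _ _ (inv_nonneg.2 hpq.symm.nonneg)
      (inv_nonneg.2 hpq.nonneg), hpq.symm.inv_add_inv_eq_one, ENNReal.rpow_one]
  have hK := measurable_greenKernel.stronglyMeasurable
  refine ⟨‖(1 / π : ℂ)‖ * A.toReal, by positivity, fun φ hφ => ?_⟩
  rw [greenOp_eq]
  refine ⟨(hφ.integral_kernel_smul hpq hK hrow hcol hA_top hA_top).const_smul _, ?_⟩
  calc eLpNorm ((1 / (π : ℂ)) • fun z => ∫ ζ in unitDisk, greenKernel z ζ • φ ζ)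
        (ENNReal.ofReal p) (volume.restrict unitDisk)
      ≤ ‖(1 / π : ℂ)‖ₑ * (A ^ q⁻¹ * A ^ p⁻¹ *
          eLpNorm φ (ENNReal.ofReal p) (volume.restrict unitDisk)) := by
        rw [eLpNorm_const_smul]
        gcongr
        exact eLpNorm_integral_kernel_smul_le hpq hK hrow hcol hφ.aestronglyMeasurable
    _ = ENNReal.ofReal (‖(1 / π : ℂ)‖ * A.toReal) *
          eLpNorm φ (ENNReal.ofReal p) (volume.restrict unitDisk) := by
        rw [hA_pow, ENNReal.ofReal_mul (norm_nonneg _), ofReal_norm, ENNReal.ofReal_toReal hA_top]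
        exact (mul_assoc _ _ _).symm
end
end

section
/- Let K be the Beurling transform Kφ(z) = (1/π) p.v.∫_ℂ φ(ζ)/(ζ−z)² dμ(ζ) and let 𝒦_z be its restriction-to-the-disk version 𝒦_z[φ](z) = (1/π) p.v.∫_𝔻 φ(ζ)/(ζ−z)² dμ(ζ) acting on L_p(𝔻). Then for every p > 1 the operator 𝒦_z : L_p(𝔻) → L_p(𝔻) is bounded and its operator norm equals the L_p(ℂ) operator norm of K. -/
open Complex Metric Set MeasureTheory ComplexConjugate Real Filter Topology

noncomputable section

/-!
Extending `φ ∈ L_p(𝔻)` by zero, `𝒦_z φ` is the restriction of `K φ₁` to `𝔻`, so every bound for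
`K` is a bound for `𝒦_z`. Conversely, the truncated Beurling integrals are covariant under the
dilations `z ↦ R z`, which rescale `L_p(𝔻)` and `L_p(B(0, R))` norms by the same factor; hence a
bound `C'` for `𝒦_z` gives `‖K(1_{B(0,R)} φ)‖_{L_p(B(0,R))} ≤ C' ‖φ‖_p` for every `R`, and thus
`‖K g‖_p ≤ C' ‖g‖_p` for compactly supported `g`. The truncated kernel lies in `L_q` for every
`q > 1`, so by Hölder the truncated integrals converge absolutely and `K` is additive; as `K` is
a priori bounded, the bound `C'` passes from the dense class of compactly supported functions
to all of `L_p(ℂ)`. The two operators therefore have the same admissible constants, hence the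
same norm.
-/

open scoped ENNReal

section General

variable {E F : Type*} [NormedAddCommGroup E] [NormedAddCommGroup F]

lemma eLpNorm_comp_smul_restrict [NormedSpace ℝ E] [MeasurableSpace E] [BorelSpace E]
    [FiniteDimensional ℝ E] (μ : Measure E) [μ.IsAddHaarMeasure] (f : E → F) {r : ℝ} (hr : r ≠ 0)
    (s : Set E) {p : ℝ≥0∞} (hp : p ≠ ∞) :
    eLpNorm (fun x => f (r • x)) p (μ.restrict ((r • ·) ⁻¹' s)) =
      ENNReal.ofReal |(r ^ Module.finrank ℝ E)⁻¹| ^ (1 / p).toReal *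
        eLpNorm f p (μ.restrict s) := by
  have he : MeasurableEmbedding (r • · : E → E) :=
    (Homeomorph.smulOfNeZero r hr).measurableEmbedding
  rw [← Function.comp_def, ← he.eLpNorm_map_measure, ← he.restrict_map,
    Measure.map_addHaar_smul μ hr, Measure.restrict_smul, eLpNorm_smul_measure_of_ne_top hp,
    smul_eq_mul]

lemma eLpNorm_le_of_eventually_restrict_ball_le [MeasurableSpace E] [OpensMeasurableSpace E]
    {μ : Measure E} {f : E → F} {p D : ℝ≥0∞} (hf : AEStronglyMeasurable f μ)
    (h : ∀ᶠ n : ℕ in atTop, eLpNorm f p (μ.restrict (ball 0 n)) ≤ D) :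
    eLpNorm f p μ ≤ D := by
  refine (Lp.eLpNorm_lim_le_liminf_eLpNorm
    (fun n : ℕ => hf.indicator (measurableSet_ball (x := 0) (ε := n))) f
    (Eventually.of_forall fun x => ?_)).trans ?_
  · refine tendsto_atTop_of_eventually_const (i₀ := ⌈‖x‖⌉₊ + 1) fun n hn => ?_
    refine indicator_of_mem (mem_ball_zero_iff.2 ?_) f
    calc ‖x‖ ≤ ⌈‖x‖⌉₊ := Nat.le_ceil _
      _ < n := by exact_mod_cast hn
  · simp_rw [eLpNorm_indicator_eq_eLpNorm_restrict measurableSet_ball]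
    exact liminf_le_of_frequently_le' h.frequently

lemma tendsto_const_mul_nhdsGT_zero {R : ℝ} (hR : 0 < R) :
    Tendsto (fun ε : ℝ => R * ε) (𝓝[>] 0) (𝓝[>] 0) :=
  tendsto_nhdsWithin_of_tendsto_nhds_of_eventually_within _
    (((continuous_const_mul R).tendsto' 0 0 (mul_zero R)).mono_left nhdsWithin_le_nhds)
    (eventually_nhdsWithin_of_forall fun _ hε => mul_pos hR hε)

lemma ENNReal.le_of_forall_le_add_mul {a b M : ℝ≥0∞} (hM : M ≠ ∞)
    (h : ∀ δ : ℝ≥0∞, δ ≠ 0 → a ≤ b + M * δ) : a ≤ b :=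
  ENNReal.le_of_forall_pos_le_add fun ε hε _ =>
    (h (ε / M) (ENNReal.div_ne_zero.2 ⟨by simpa using hε.ne', hM⟩)).trans
      (add_le_add_right ENNReal.mul_div_le _)

end General

lemma preimage_smul_ball_eq_unitDisk {R : ℝ} (hR : 0 < R) :
    (R • · : ℂ → ℂ) ⁻¹' ball 0 R = unitDisk := by
  ext w
  simp [unitDisk, abs_of_pos hR, hR]

lemma measurableSet_unitDisk : MeasurableSet unitDisk := measurableSet_ball

def truncKernel (ε : ℝ) (u : ℂ) : ℂ := if ε < ‖u‖ then (u ^ 2)⁻¹ else 0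

def truncBeurling (φ : ℂ → ℂ) (z : ℂ) (ε : ℝ) : ℂ :=
  (1 / (π : ℂ)) * ∫ ζ in {ζ : ℂ | ε < dist ζ z}, φ ζ / (ζ - z) ^ 2

def HasBeurlingPV (φ g : ℂ → ℂ) (μ : Measure ℂ) : Prop :=
  ∀ᵐ z ∂μ, Tendsto (truncBeurling φ z) (𝓝[>] 0) (𝓝 (g z))

def HasLpBound (T : (ℂ → ℂ) → ℂ → ℂ) (p : ℝ≥0∞) (μ : Measure ℂ) (C : ℝ) : Prop :=
  ∀ φ, MemLp φ p μ → eLpNorm (T φ) p μ ≤ ENNReal.ofReal C * eLpNorm φ p μ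

lemma measurable_truncKernel (ε : ℝ) : Measurable (truncKernel ε) :=
  Measurable.ite (measurableSet_lt measurable_const measurable_norm) (by fun_prop) measurable_const

lemma setIntegral_div_sq_eq_integral_mul_truncKernel (φ : ℂ → ℂ) (z : ℂ) (ε : ℝ) :
    ∫ ζ in {ζ : ℂ | ε < dist ζ z}, φ ζ / (ζ - z) ^ 2 = ∫ ζ, φ ζ * truncKernel ε (ζ - z) := by
  rw [← integral_indicator (measurableSet_lt measurable_const (by fun_prop))]
  congr 1 with ζ
  simp [truncKernel, indicator, dist_eq_norm, div_eq_mul_inv]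

lemma truncBeurling_eq (φ : ℂ → ℂ) (z : ℂ) (ε : ℝ) :
    truncBeurling φ z ε = (1 / (π : ℂ)) * ∫ ζ, φ ζ * truncKernel ε (ζ - z) := by
  rw [truncBeurling, setIntegral_div_sq_eq_integral_mul_truncKernel]

lemma truncBeurling_indicator {s : Set ℂ} (hs : MeasurableSet s) (φ : ℂ → ℂ) (z : ℂ) (ε : ℝ) :
    truncBeurling (s.indicator φ) z ε =
      (1 / (π : ℂ)) * ∫ ζ in s ∩ {ζ : ℂ | ε < dist ζ z}, φ ζ / (ζ - z) ^ 2 := by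
  have : (fun ζ => s.indicator φ ζ / (ζ - z) ^ 2) = s.indicator fun ζ => φ ζ / (ζ - z) ^ 2 := by
    ext ζ; by_cases h : ζ ∈ s <;> simp [h]
  rw [truncBeurling, this, setIntegral_indicator hs, inter_comm]

lemma HasBeurlingPV.ae_eq {φ f g : ℂ → ℂ} {μ : Measure ℂ} (hf : HasBeurlingPV φ f μ)
    (hg : HasBeurlingPV φ g μ) : f =ᵐ[μ] g := by
  filter_upwards [hf, hg] with z hfz hgz using tendsto_nhds_unique hfz hgz

lemma HasBeurlingPV.mono {φ g : ℂ → ℂ} {μ ν : Measure ℂ} (h : HasBeurlingPV φ g μ) (hνμ : ν ≪ μ) :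
    HasBeurlingPV φ g ν :=
  hνμ.ae_le h

lemma HasBeurlingPV.aestronglyMeasurable {φ g : ℂ → ℂ} (hφ : AEStronglyMeasurable φ volume)
    (h : HasBeurlingPV φ g volume) : AEStronglyMeasurable g volume := by
  have hseq : Tendsto (fun n : ℕ => 1 / ((n : ℝ) + 1)) atTop (𝓝[>] 0) :=
    tendsto_nhdsWithin_of_tendsto_nhds_of_eventually_within _
      tendsto_one_div_add_atTop_nhds_zero_nat
      (Eventually.of_forall fun n => by simp only [mem_Ioi]; positivity)
  refine aestronglyMeasurable_of_tendsto_ae atTop (fun n => ?_)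
    (by filter_upwards [h] with z hz using hz.comp hseq)
  simp_rw [Function.comp_def, truncBeurling_eq]
  refine AEStronglyMeasurable.const_mul ?_ _
  exact AEStronglyMeasurable.integral_prod_right'
    (f := fun q : ℂ × ℂ => φ q.2 * truncKernel _ (q.2 - q.1))
    ((hφ.comp_quasiMeasurePreserving Measure.quasiMeasurePreserving_snd).mul
      ((measurable_truncKernel _).comp (measurable_snd.sub measurable_fst)).aestronglyMeasurable)

lemma norm_truncKernel_le {ε : ℝ} (hε : 0 < ε) (u : ℂ) :
    ‖truncKernel ε u‖ ≤ ((1 + ε) / ε) ^ 2 * ((1 + ‖u‖) ^ 2)⁻¹ := by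
  unfold truncKernel
  split_ifs with h
  · have hu : 0 < ‖u‖ := hε.trans h
    calc ‖(u ^ 2)⁻¹‖ = ((1 + ‖u‖) / ‖u‖) ^ 2 * ((1 + ‖u‖) ^ 2)⁻¹ := by
          rw [norm_inv, norm_pow]; field_simp
      _ ≤ ((1 + ε) / ε) ^ 2 * ((1 + ‖u‖) ^ 2)⁻¹ := by
          gcongr ?_ ^ 2 * _
          rw [div_le_div_iff₀ hu hε]
          nlinarith
  · simp only [norm_zero]; positivity

lemma memLp_inv_one_add_norm_sq {q : ℝ} (hq : 1 < q) :
    MemLp (fun u : ℂ => ((1 + ‖u‖) ^ 2)⁻¹) (ENNReal.ofReal q) volume := by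
  have hq0 : 0 < q := by linarith
  refine (integrable_norm_rpow_iff (by fun_prop) (by simpa using hq0) ENNReal.ofReal_ne_top).1 ?_
  refine (integrable_one_add_norm (E := ℂ) (μ := volume) (r := 2 * q)
    (by rw [Complex.finrank_real_complex]; push_cast; linarith)).congr
    (Eventually.of_forall fun u => ?_)
  have hu : 0 < 1 + ‖u‖ := by positivity
  simp only [ENNReal.toReal_ofReal hq0.le, norm_inv, norm_pow, Real.norm_of_nonneg hu.le]
  rw [Real.inv_rpow (by positivity), ← Real.rpow_natCast, ← Real.rpow_mul hu.le,
    Real.rpow_neg hu.le]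
  norm_num

lemma memLp_truncKernel {q : ℝ} (hq : 1 < q) {ε : ℝ} (hε : 0 < ε) :
    MemLp (truncKernel ε) (ENNReal.ofReal q) volume :=
  ((memLp_inv_one_add_norm_sq hq).const_mul (((1 + ε) / ε) ^ 2)).of_le
    (measurable_truncKernel ε).aestronglyMeasurable
    (Eventually.of_forall fun u => (norm_truncKernel_le hε u).trans (le_abs_self _))

lemma integrable_mul_truncKernel {p : ℝ} (hp : 1 < p) {φ : ℂ → ℂ}
    (hφ : MemLp φ (ENNReal.ofReal p) volume) (z : ℂ) {ε : ℝ} (hε : 0 < ε) :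
    Integrable (fun ζ => φ ζ * truncKernel ε (ζ - z)) volume := by
  have hpq := Real.HolderConjugate.conjExponent hp
  have : ENNReal.HolderTriple (ENNReal.ofReal p) (ENNReal.ofReal p.conjExponent) 1 :=
    hpq.ennrealOfReal
  exact hφ.integrable_mul ((memLp_truncKernel hpq.symm.lt hε).comp_measurePreserving
    (measurePreserving_sub_right volume z))

lemma HasBeurlingPV.add {p : ℝ} (hp : 1 < p) {φ ψ f g : ℂ → ℂ} {μ : Measure ℂ}
    (hφ : MemLp φ (ENNReal.ofReal p) volume) (hψ : MemLp ψ (ENNReal.ofReal p) volume)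
    (hf : HasBeurlingPV φ f μ) (hg : HasBeurlingPV ψ g μ) : HasBeurlingPV (φ + ψ) (f + g) μ := by
  filter_upwards [hf, hg] with z hfz hgz
  refine (hfz.add hgz).congr' ?_
  filter_upwards [self_mem_nhdsWithin] with ε (hε : 0 < ε)
  simp only [truncBeurling_eq, Pi.add_apply, add_mul, ← mul_add]
  rw [integral_add (integrable_mul_truncKernel hp hφ z hε) (integrable_mul_truncKernel hp hψ z hε)]

lemma truncKernel_smul {R : ℝ} (hR : 0 < R) (ε : ℝ) (u : ℂ) :
    truncKernel (R * ε) (R • u) = ((R : ℂ) ^ 2)⁻¹ * truncKernel ε u := by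
  have hnorm : ‖R • u‖ = R * ‖u‖ := by rw [norm_smul, Real.norm_of_nonneg hR.le]
  simp only [truncKernel, hnorm, mul_lt_mul_iff_right₀ hR]
  split_ifs <;> simp [real_smul, mul_pow, mul_comm]

lemma truncBeurling_comp_smul {R : ℝ} (hR : 0 < R) (φ : ℂ → ℂ) (z : ℂ) (ε : ℝ) :
    truncBeurling (fun w => φ (R • w)) z ε = truncBeurling φ (R • z) (R * ε) := by
  have hR0 : (R : ℂ) ≠ 0 := by exact_mod_cast hR.ne'
  set F : ℂ → ℂ := fun η => φ η * truncKernel (R * ε) (η - R • z)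
  have hF : ∀ ζ, φ (R • ζ) * truncKernel ε (ζ - z) = (R : ℂ) ^ 2 * F (R • ζ) := fun ζ => by
    simp only [F, ← smul_sub, truncKernel_smul hR]
    field_simp
  rw [truncBeurling_eq, truncBeurling_eq, integral_congr_ae (Eventually.of_forall hF),
    integral_const_mul, Measure.integral_comp_smul, Complex.finrank_real_complex,
    abs_of_pos (by positivity), real_smul]
  push_cast
  rw [mul_inv_cancel_left₀ (pow_ne_zero 2 hR0)]

lemma HasBeurlingPV.comp_smul {R : ℝ} (hR : 0 < R) {φ g : ℂ → ℂ}
    (h : HasBeurlingPV φ g volume) :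
    HasBeurlingPV (fun w => φ (R • w)) (fun w => g (R • w)) volume := by
  filter_upwards [(Measure.quasiMeasurePreserving_smul volume hR.ne').ae h] with z hz
  rw [show truncBeurling (fun w => φ (R • w)) z = fun ε => truncBeurling φ (R • z) (R * ε) from
    funext (truncBeurling_comp_smul hR φ z)]
  exact hz.comp (tendsto_const_mul_nhdsGT_zero hR)

section Operators

variable {K Kz : (ℂ → ℂ) → ℂ → ℂ}

variable {p : ℝ≥0∞}
  (hK : ∀ φ, MemLp φ p volume → HasBeurlingPV φ (K φ) volume)
  (hKz : ∀ φ, MemLp φ p (volume.restrict unitDisk) →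
    HasBeurlingPV (unitDisk.indicator φ) (Kz φ) (volume.restrict unitDisk))
include hK hKz

lemma hasLpBound_disk_of_hasLpBound {C : ℝ} (hC : HasLpBound K p volume C) :
    HasLpBound Kz p (volume.restrict unitDisk) C := by
  intro φ hφ
  have hφ₁ : MemLp (unitDisk.indicator φ) p volume :=
    (memLp_indicator_iff_restrict measurableSet_unitDisk).2 hφ
  have hae : Kz φ =ᵐ[volume.restrict unitDisk] K (unitDisk.indicator φ) :=
    (hKz φ hφ).ae_eq ((hK _ hφ₁).mono Measure.absolutelyContinuous_restrict)
  calc eLpNorm (Kz φ) p (volume.restrict unitDisk)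
      = eLpNorm (K (unitDisk.indicator φ)) p (volume.restrict unitDisk) := eLpNorm_congr_ae hae
    _ ≤ eLpNorm (K (unitDisk.indicator φ)) p volume :=
        eLpNorm_mono_measure _ Measure.restrict_le_self
    _ ≤ ENNReal.ofReal C * eLpNorm (unitDisk.indicator φ) p volume := hC _ hφ₁
    _ = ENNReal.ofReal C * eLpNorm φ p (volume.restrict unitDisk) := by
        rw [eLpNorm_indicator_eq_eLpNorm_restrict measurableSet_unitDisk]

variable {C' : ℝ} (hC' : HasLpBound Kz p (volume.restrict unitDisk) C') (hp : p ≠ ∞)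
include hC' hp

lemma eLpNorm_restrict_ball_le_of_hasLpBound_disk {φ : ℂ → ℂ} (hφ : MemLp φ p volume) {R : ℝ}
    (hR : 0 < R) :
    eLpNorm (K ((ball 0 R).indicator φ)) p (volume.restrict (ball 0 R)) ≤
      ENNReal.ofReal C' * eLpNorm φ p (volume.restrict (ball 0 R)) := by
  set c : ℝ≥0∞ := ENNReal.ofReal |(R ^ Module.finrank ℝ ℂ)⁻¹| ^ (1 / p).toReal
  have hc0 : c ≠ 0 := (ENNReal.rpow_pos (by simpa using pow_pos hR 2) ENNReal.ofReal_ne_top).ne'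
  have hctop : c ≠ ∞ := ENNReal.rpow_ne_top_of_nonneg ENNReal.toReal_nonneg ENNReal.ofReal_ne_top
  have hscale (f : ℂ → ℂ) : eLpNorm (fun w => f (R • w)) p (volume.restrict unitDisk) =
      c * eLpNorm f p (volume.restrict (ball 0 R)) := by
    rw [← preimage_smul_ball_eq_unitDisk hR]
    exact eLpNorm_comp_smul_restrict volume f hR.ne' _ hp
  -- `ψ` is `φ` rescaled to the unit disk; by `hscale` both sides of the bound for `Kz ψ` pick up
  -- the same factor `c`.
  set ψ : ℂ → ℂ := fun w => φ (R • w)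
  have hψ : MemLp ψ p (volume.restrict unitDisk) :=
    ⟨(hφ.1.comp_quasiMeasurePreserving
        (Measure.quasiMeasurePreserving_smul volume hR.ne')).restrict,
      by rw [hscale]; exact ENNReal.mul_lt_top hctop.lt_top (hφ.restrict _).2⟩
  have hψ_indicator : unitDisk.indicator ψ = fun w => (ball 0 R).indicator φ (R • w) := by
    rw [← preimage_smul_ball_eq_unitDisk hR]
    rfl
  have hae : Kz ψ =ᵐ[volume.restrict unitDisk] fun w => K ((ball 0 R).indicator φ) (R • w) := by
    refine (hKz ψ hψ).ae_eq ?_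
    rw [hψ_indicator]
    exact ((hK _ (hφ.indicator measurableSet_ball)).comp_smul hR).mono
      Measure.absolutelyContinuous_restrict
  rw [← ENNReal.mul_le_mul_iff_right hc0 hctop, ← hscale, mul_left_comm, ← hscale,
    ← eLpNorm_congr_ae hae]
  exact hC' ψ hψ

lemma eLpNorm_le_of_hasCompactSupport {g : ℂ → ℂ} (hg : MemLp g p volume)
    (hgc : HasCompactSupport g) :
    eLpNorm (K g) p volume ≤ ENNReal.ofReal C' * eLpNorm g p volume := by
  obtain ⟨r, hr⟩ := (isBounded_iff_subset_ball 0).1 hgc.isCompact.isBounded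
  refine eLpNorm_le_of_eventually_restrict_ball_le ((hK g hg).aestronglyMeasurable hg.1) ?_
  filter_upwards [eventually_gt_atTop ⌈r⌉₊] with n hn
  have hrn : r < n := Nat.lt_of_ceil_lt hn
  have hg_indicator : (ball 0 n).indicator g = g :=
    indicator_eq_self.2 ((subset_tsupport g).trans (hr.trans (ball_subset_ball hrn.le)))
  calc eLpNorm (K g) p (volume.restrict (ball 0 n))
      = eLpNorm (K ((ball 0 n).indicator g)) p (volume.restrict (ball 0 n)) := by
        rw [hg_indicator]
    _ ≤ ENNReal.ofReal C' * eLpNorm g p (volume.restrict (ball 0 n)) :=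
        eLpNorm_restrict_ball_le_of_hasLpBound_disk hK hKz hC' hp hg
          (Nat.cast_pos.2 (Nat.zero_lt_of_lt hn))
    _ ≤ ENNReal.ofReal C' * eLpNorm g p volume := by
        gcongr
        exact Measure.restrict_le_self

end Operators

lemma hasLpBound_of_hasLpBound_disk {K Kz : (ℂ → ℂ) → ℂ → ℂ} {p : ℝ} (hp : 1 < p)
    (hK : ∀ φ, MemLp φ (ENNReal.ofReal p) volume → HasBeurlingPV φ (K φ) volume)
    (hKz : ∀ φ, MemLp φ (ENNReal.ofReal p) (volume.restrict unitDisk) →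
      HasBeurlingPV (unitDisk.indicator φ) (Kz φ) (volume.restrict unitDisk))
    {C C' : ℝ} (hC : HasLpBound K (ENNReal.ofReal p) volume C)
    (hC' : HasLpBound Kz (ENNReal.ofReal p) (volume.restrict unitDisk) C') :
    HasLpBound K (ENNReal.ofReal p) volume C' := by
  intro φ hφ
  set P := ENNReal.ofReal p
  have hP₁ : 1 ≤ P := by simpa [P] using hp.le
  refine ENNReal.le_of_forall_le_add_mul (M := ENNReal.ofReal C' + ENNReal.ofReal C) (by simp)
    fun δ hδ => ?_
  obtain ⟨g, hgc, hφg, -, hg⟩ := hφ.exists_hasCompactSupport_eLpNorm_sub_le ENNReal.ofReal_ne_top hδ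
  have hφg' : MemLp (φ - g) P volume := hφ.sub hg
  have hKg := hK g hg
  have hKφg := hK _ hφg'
  have hKφ : K φ =ᵐ[volume] K g + K (φ - g) :=
    (hK φ hφ).ae_eq (by simpa using hKg.add hp hg hφg' hKφg)
  have hg_le : eLpNorm g P volume ≤ eLpNorm φ P volume + δ :=
    calc eLpNorm g P volume = eLpNorm (φ - (φ - g)) P volume := by rw [sub_sub_cancel]
      _ ≤ eLpNorm φ P volume + eLpNorm (φ - g) P volume := eLpNorm_sub_le hφ.1 hφg'.1 hP₁
      _ ≤ eLpNorm φ P volume + δ := by gcongr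
  calc eLpNorm (K φ) P volume
      = eLpNorm (K g + K (φ - g)) P volume := eLpNorm_congr_ae hKφ
    _ ≤ eLpNorm (K g) P volume + eLpNorm (K (φ - g)) P volume :=
        eLpNorm_add_le (hKg.aestronglyMeasurable hg.1) (hKφg.aestronglyMeasurable hφg'.1) hP₁
    _ ≤ ENNReal.ofReal C' * eLpNorm g P volume + ENNReal.ofReal C * eLpNorm (φ - g) P volume :=
        add_le_add (eLpNorm_le_of_hasCompactSupport hK hKz hC' ENNReal.ofReal_ne_top hg hgc)
          (hC _ hφg')
    _ ≤ ENNReal.ofReal C' * (eLpNorm φ P volume + δ) + ENNReal.ofReal C * δ := by gcongr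
    _ = ENNReal.ofReal C' * eLpNorm φ P volume + (ENNReal.ofReal C' + ENNReal.ofReal C) * δ := by
        ring

/-- Let `K` be the Beurling transform
`Kφ(z) = (1/π) p.v. ∫_ℂ φ(ζ)/(ζ−z)² dμ(ζ)` and `Kz` its restriction-to-the-disk version
`𝒦_z[φ](z) = (1/π) p.v. ∫_𝔻 φ(ζ)/(ζ−z)² dμ(ζ)` acting on `L_p(𝔻)`.  Then for every
`p > 1` the operator `𝒦_z : L_p(𝔻) → L_p(𝔻)` is bounded, and its operator norm equals
the `L_p(ℂ)` operator norm of `K`.  (The principal-value definitions of `K` and `Kz`, and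
the Calderón–Zygmund boundedness of `K`, are encoded as hypotheses.) -/
theorem beurling_disk_norm (p : ℝ) (hp : 1 < p)
    (K Kz : (ℂ → ℂ) → (ℂ → ℂ))
    (hK_pv : ∀ φ : ℂ → ℂ, MemLp φ (ENNReal.ofReal p) volume →
      ∀ᵐ z : ℂ, Tendsto
        (fun ε : ℝ => (1 / (Real.pi : ℂ)) *
          ∫ ζ in {ζ : ℂ | ε < dist ζ z}, φ ζ / (ζ - z) ^ 2)
        (𝓝[>] (0:ℝ)) (𝓝 (K φ z)))
    (hK_bdd : ∃ C : ℝ, 0 ≤ C ∧ ∀ φ : ℂ → ℂ, MemLp φ (ENNReal.ofReal p) volume →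
      eLpNorm (K φ) (ENNReal.ofReal p) volume ≤
        ENNReal.ofReal C * eLpNorm φ (ENNReal.ofReal p) volume)
    (hKz_pv : ∀ φ : ℂ → ℂ, MemLp φ (ENNReal.ofReal p) (volume.restrict unitDisk) →
      ∀ᵐ z ∂(volume.restrict unitDisk), Tendsto
        (fun ε : ℝ => (1 / (Real.pi : ℂ)) *
          ∫ ζ in unitDisk ∩ {ζ : ℂ | ε < dist ζ z}, φ ζ / (ζ - z) ^ 2)
        (𝓝[>] (0:ℝ)) (𝓝 (Kz φ z))) :
    (∃ C : ℝ, 0 ≤ C ∧ ∀ φ : ℂ → ℂ,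
      MemLp φ (ENNReal.ofReal p) (volume.restrict unitDisk) →
        eLpNorm (Kz φ) (ENNReal.ofReal p) (volume.restrict unitDisk) ≤
          ENNReal.ofReal C * eLpNorm φ (ENNReal.ofReal p) (volume.restrict unitDisk)) ∧
    sInf {C : ℝ | 0 ≤ C ∧ ∀ φ : ℂ → ℂ,
        MemLp φ (ENNReal.ofReal p) (volume.restrict unitDisk) →
          eLpNorm (Kz φ) (ENNReal.ofReal p) (volume.restrict unitDisk) ≤
            ENNReal.ofReal C * eLpNorm φ (ENNReal.ofReal p) (volume.restrict unitDisk)} =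
    sInf {C : ℝ | 0 ≤ C ∧ ∀ φ : ℂ → ℂ,
        MemLp φ (ENNReal.ofReal p) volume →
          eLpNorm (K φ) (ENNReal.ofReal p) volume ≤
            ENNReal.ofReal C * eLpNorm φ (ENNReal.ofReal p) volume} := by
  obtain ⟨C, hC₀, hC⟩ := hK_bdd
  have hK : ∀ φ, MemLp φ (ENNReal.ofReal p) volume → HasBeurlingPV φ (K φ) volume := hK_pv
  have hKz : ∀ φ, MemLp φ (ENNReal.ofReal p) (volume.restrict unitDisk) →
      HasBeurlingPV (unitDisk.indicator φ) (Kz φ) (volume.restrict unitDisk) := fun φ hφ => by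
    have h := hKz_pv φ hφ
    simp only [← truncBeurling_indicator measurableSet_unitDisk] at h
    exact h
  refine ⟨⟨C, hC₀, hasLpBound_disk_of_hasLpBound hK hKz hC⟩, congrArg sInf ?_⟩
  ext C'
  exact and_congr_right fun _ =>
    ⟨hasLpBound_of_hasLpBound_disk hp hK hKz hC, hasLpBound_disk_of_hasLpBound hK hKz⟩
end
end

section
/- 𝒦_{z̄}[φ](z) = conj( K[φ₂](z) ) for all z ∈ 𝔻, where φ₂(w) = conj(φ(1/w̄))/w̄² for |w|>1 and φ₂(w)=0 for |w|≤1, K is the Beurling transform on ℂ, and 𝒦_{z̄}[φ](z) = (1/π)∫_𝔻 φ(ζ)/(1−ζz̄)² dμ(ζ). -/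
/-!
The inversion `w ↦ 1 / w̄` maps the punctured disk bijectively onto `{ζ | 1 < ‖ζ‖}`, where
`φ₂` lives, and its real Jacobian determinant is `-‖w‖⁻⁴`. Substituting `ζ = 1 / w̄` in the
Beurling integral of `φ₂` turns the integrand into
`‖w‖⁻⁴ · conj (φ w) w² / (1 / w̄ - z)² = conj (φ w / (1 - w z̄)²)`.
-/

open Complex Metric Set MeasureTheory ComplexConjugate Real

noncomputable section

/-- The operator `𝒦_z̄[φ](z) = (1/π) ∫_𝔻 φ(ζ)/(1−ζz̄)² dμ(ζ)`. -/
def Kzbar (φ : ℂ → ℂ) (z : ℂ) : ℂ :=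
  (1 / (Real.pi : ℂ)) * ∫ ζ in unitDisk, φ ζ / (1 - ζ * conj z) ^ 2

/-- The Beurling transform applied to a function vanishing near the singularity: for `g`
supported outside the disk and `z ∈ 𝔻` the principal value reduces to an absolutely
convergent integral `Kg(z) = (1/π) ∫_ℂ g(ζ)/(ζ−z)² dμ(ζ)`. -/
def beurling (g : ℂ → ℂ) (z : ℂ) : ℂ :=
  (1 / (Real.pi : ℂ)) * ∫ ζ : ℂ, g ζ / (ζ - z) ^ 2

/-- The reflected function `φ₂(w) = conj(φ(1/w̄))/w̄²` for `|w| > 1`, `φ₂(w) = 0`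
for `|w| ≤ 1`. -/
def reflected (φ : ℂ → ℂ) (w : ℂ) : ℂ :=
  if 1 < ‖w‖ then conj (φ (1 / conj w)) / (conj w) ^ 2 else 0

def invConj (w : ℂ) : ℂ := (conj w)⁻¹

lemma invConj_involutive : Function.Involutive invConj := fun w => by
  simp [invConj]

lemma norm_invConj (w : ℂ) : ‖invConj w‖ = ‖w‖⁻¹ := by
  simp [invConj]

lemma image_invConj_unitDisk_diff_zero :
    invConj '' (unitDisk \ {0}) = {ζ : ℂ | 1 < ‖ζ‖} := by
  rw [invConj_involutive.image_eq_preimage_symm]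
  ext ζ
  have hnorm : ‖ζ‖ = ‖invConj ζ‖⁻¹ := by rw [norm_invConj, inv_inv]
  simp only [mem_preimage, mem_sdiff, unitDisk, mem_ball_zero_iff, mem_singleton_iff,
    mem_ofPred_eq, hnorm, one_lt_inv_iff₀, norm_pos_iff, and_comm]

/-- `v ↦ -v̄ / w̄²`. -/
def invConjDeriv (w : ℂ) : ℂ →L[ℝ] ℂ :=
  ((ContinuousLinearMap.smulRight (1 : ℂ →L[ℂ] ℂ) (-((conj w) ^ 2)⁻¹)).restrictScalars ℝ).comp
    (Complex.conjCLE : ℂ →L[ℝ] ℂ)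

lemma hasFDerivAt_invConj {w : ℂ} (hw : w ≠ 0) :
    HasFDerivAt invConj (invConjDeriv w) w :=
  ((hasDerivAt_inv (by simpa using hw)).hasFDerivAt.restrictScalars ℝ).comp w
    Complex.conjCLE.hasFDerivAt

lemma det_invConjDeriv (w : ℂ) :
    (invConjDeriv w).det = -((Complex.normSq w) ^ 2)⁻¹ := by
  have hmul : ((ContinuousLinearMap.smulRight (1 : ℂ →L[ℂ] ℂ)
      (-((conj w) ^ 2)⁻¹)).restrictScalars ℝ).toLinearMap
      = Algebra.lmul ℝ ℂ (-((conj w) ^ 2)⁻¹) := by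
    ext v
    simp [mul_comm]
  have hdet : (invConjDeriv w).det
      = LinearMap.det ((Algebra.lmul ℝ ℂ (-((conj w) ^ 2)⁻¹)).comp
        Complex.conjAe.toLinearMap) := by
    rw [invConjDeriv, ContinuousLinearMap.det, ContinuousLinearMap.toLinearMap_comp, hmul]
    rfl
  rw [hdet, LinearMap.det_comp, Complex.det_conjAe, ← Algebra.norm_apply,
    Algebra.norm_complex_apply]
  simp [Complex.normSq_conj]

lemma setIntegral_one_lt_norm_eq_setIntegral_unitDisk_invConj {E : Type*}
    [NormedAddCommGroup E] [NormedSpace ℝ E] (g : ℂ → E) :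
    ∫ ζ in {ζ : ℂ | 1 < ‖ζ‖}, g ζ
      = ∫ w in unitDisk, ((Complex.normSq w) ^ 2)⁻¹ • g (invConj w) := by
  have hs : MeasurableSet (unitDisk \ {0}) :=
    measurableSet_ball.diff (measurableSet_singleton 0)
  have hderiv : ∀ w ∈ unitDisk \ {0},
      HasFDerivWithinAt invConj (invConjDeriv w) (unitDisk \ {0}) w :=
    fun w hw => (hasFDerivAt_invConj hw.2).hasFDerivWithinAt
  rw [← image_invConj_unitDisk_diff_zero,
    integral_image_eq_integral_abs_det_fderiv_smul volume hs hderiv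
      invConj_involutive.injective.injOn,
    setIntegral_congr_set (sdiff_null_ae_eq_self (measure_singleton 0))]
  simp only [det_invConjDeriv, abs_neg, abs_inv, abs_pow, sq_abs]

lemma reflected_invConj (φ : ℂ → ℂ) {w : ℂ} (hw0 : w ≠ 0) (hw1 : ‖w‖ < 1) :
    reflected φ (invConj w) = conj (φ w) * w ^ 2 := by
  have hout : 1 < ‖invConj w‖ := by
    rw [norm_invConj]
    exact one_lt_inv₀ (norm_pos_iff.2 hw0) |>.2 hw1
  rw [reflected, if_pos hout]
  simp [invConj, div_eq_mul_inv]

lemma inv_normSq_sq_smul_div_sq_invConj_sub (a z : ℂ) {w : ℂ} (hw : w ≠ 0) :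
    ((Complex.normSq w) ^ 2)⁻¹ • (conj a * w ^ 2 / (invConj w - z) ^ 2)
      = conj (a / (1 - w * conj z) ^ 2) := by
  have hwc : conj w ≠ 0 := by simpa using hw
  have hsub : invConj w - z = conj (1 - w * conj z) / conj w := by
    rw [eq_div_iff hwc, invConj, sub_mul, inv_mul_cancel₀ hwc]
    simp [mul_comm]
  rw [hsub, Complex.real_smul]
  push_cast
  rw [Complex.normSq_eq_conj_mul_self, map_div₀, map_pow]
  field_simp

theorem Kzbar_eq_conj_beurling_general (φ : ℂ → ℂ) :
    ∀ z ∈ unitDisk, Kzbar φ z = conj (beurling (reflected φ) z) := by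
  intro z _
  have hsupp : ∫ ζ, reflected φ ζ / (ζ - z) ^ 2
      = ∫ ζ in {ζ : ℂ | 1 < ‖ζ‖}, reflected φ ζ / (ζ - z) ^ 2 :=
    (setIntegral_eq_integral_of_forall_compl_eq_zero fun ζ (hζ : ¬1 < ‖ζ‖) => by
      rw [reflected, if_neg hζ, zero_div]).symm
  have hpointwise : ∀ᵐ w ∂volume.restrict unitDisk,
      ((Complex.normSq w) ^ 2)⁻¹ • (reflected φ (invConj w) / (invConj w - z) ^ 2)
        = conj (φ w / (1 - w * conj z) ^ 2) := by
    filter_upwards [ae_restrict_mem measurableSet_ball,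
      ae_restrict_of_ae (Measure.ae_ne volume 0)] with w hw1 hw0
    rw [reflected_invConj φ hw0 (by simpa [unitDisk] using hw1),
      inv_normSq_sq_smul_div_sq_invConj_sub _ _ hw0]
  rw [Kzbar, beurling, map_mul, hsupp, setIntegral_one_lt_norm_eq_setIntegral_unitDisk_invConj,
    integral_congr_ae hpointwise, integral_conj]
  simp

/-- For `φ ∈ L_p(𝔻)`, `p ≥ 2`, one has
`𝒦_z̄[φ](z) = conj(K[φ₂](z))` for all `z ∈ 𝔻`. -/
theorem Kzbar_eq_conj_beurling (p : ℝ) (hp : 2 ≤ p) (φ : ℂ → ℂ)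
    (hφ : MemLp φ (ENNReal.ofReal p) (volume.restrict unitDisk)) :
    ∀ z ∈ unitDisk, Kzbar φ z = conj (beurling (reflected φ) z) :=
  Kzbar_eq_conj_beurling_general φ
end
end

section
/- Define recursively F₀ = 𝒫[H] (the harmonic extension of H ∈ C^α(𝕋), 1/2<α<1) and Fₙ = 𝒦[(ω̄'/ω') ∂F_{n−1}] for n ≥ 1, where ω is conformal on 𝔻 with |ω'|>0. Then for every p with 2 < p < 1/(1−α): ‖∂Fₙ‖_{L_p(𝔻)} ≤ ‖K‖_p^n ‖∂F₀‖_{L_p(𝔻)} and ‖∂̄Fₙ‖_{L_p(𝔻)} ≤ (1+‖K‖_p)‖K‖_p^{n−1} ‖∂F₀‖_{L_p(𝔻)} for n ≥ 1. -/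
open Complex Metric Set MeasureTheory ComplexConjugate Real

noncomputable section

/-- The unit circle in `ℂ`. -/
def unitCircle : Set ℂ := Metric.sphere 0 1

/-- Wirtinger derivative `∂ = (∂_x − i∂_y)/2`. -/
def wd (f : ℂ → ℂ) (z : ℂ) : ℂ :=
  (fderiv ℝ f z 1 - Complex.I * fderiv ℝ f z Complex.I) / 2

/-- Wirtinger derivative `∂̄ = (∂_x + i∂_y)/2`. -/
def wdbar (f : ℂ → ℂ) (z : ℂ) : ℂ :=
  (fderiv ℝ f z 1 + Complex.I * fderiv ℝ f z Complex.I) / 2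

/-- The Poisson integral (harmonic extension). -/
def poissonOp (φ : ℂ → ℂ) (z : ℂ) : ℂ :=
  (1 / (2 * Real.pi * Complex.I)) *
    ∮ ζ in C(0, 1), (1 / (ζ - z) + conj z / (1 - ζ * conj z)) * φ ζ

/-- The unimodular multiplier `ω̄'/ω'`. -/
def mult (ω : ℂ → ℂ) (z : ℂ) : ℂ := conj (deriv ω z) / deriv ω z

/-! Since `|ω̄'/ω'| ≤ 1`, multiplying by it does not increase `L^p` norms, so each step of the
recursion multiplies `‖∂Fₙ‖_p` by at most `‖K‖_p`, and geometric growth follows by induction.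
For `∂̄Fₙ` the extra identity term is handled by Minkowski's inequality (`p ≥ 1`). -/

theorem norm_mult_le_one (ω : ℂ → ℂ) (z : ℂ) : ‖mult ω z‖ ≤ 1 := by
  rcases eq_or_ne (deriv ω z) 0 with h | h
  · simp [mult, h]
  · rw [mult, norm_div, RCLike.norm_conj, div_self (norm_ne_zero_iff.mpr h)]

theorem measurable_mult (ω : ℂ → ℂ) : Measurable (mult ω) :=
  (continuous_conj.measurable.comp (measurable_deriv ω)).div (measurable_deriv ω)

theorem measurable_wd (f : ℂ → ℂ) : Measurable (wd f) :=
  ((measurable_fderiv_apply_const ℝ f 1).sub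
    ((measurable_fderiv_apply_const ℝ f I).const_mul I)).div_const 2

theorem measurable_wdbar (f : ℂ → ℂ) : Measurable (wdbar f) :=
  ((measurable_fderiv_apply_const ℝ f 1).add
    ((measurable_fderiv_apply_const ℝ f I).const_mul I)).div_const 2

theorem MeasureTheory.eLpNorm_mul_le_of_norm_le_one {α 𝕜 : Type*} [MeasurableSpace α]
    [NormedRing 𝕜] {u f : α → 𝕜} (hu : ∀ x, ‖u x‖ ≤ 1) (p : ENNReal) (μ : Measure α) :
    eLpNorm (fun x => u x * f x) p μ ≤ eLpNorm f p μ :=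
  eLpNorm_mono fun x =>
    (norm_mul_le _ _).trans (mul_le_of_le_one_left (norm_nonneg _) (hu x))

theorem le_pow_mul_of_le_mul {M : Type*} [CommMonoid M] [Preorder M] [MulLeftMono M]
    {a : ℕ → M} {c : M} (h : ∀ n, a (n + 1) ≤ c * a n) (n : ℕ) : a n ≤ c ^ n * a 0 := by
  induction n with
  | zero => simp
  | succ n ih =>
    calc a (n + 1) ≤ c * a n := h n
      _ ≤ c * (c ^ n * a 0) := mul_le_mul_right ih c
      _ = c ^ (n + 1) * a 0 := by rw [pow_succ', mul_assoc]

theorem derivative_estimates_general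
    (p : ℝ) (hp2 : 2 < p)
    (ω : ℂ → ℂ)
    (F : ℕ → ℂ → ℂ)
    (Np : ℝ) (Kz Kzb : (ℂ → ℂ) → (ℂ → ℂ))
    (hKz : ∀ g : ℂ → ℂ,
      eLpNorm (Kz g) (ENNReal.ofReal p) (volume.restrict unitDisk) ≤
        ENNReal.ofReal Np * eLpNorm g (ENNReal.ofReal p) (volume.restrict unitDisk))
    (hKzb : ∀ g : ℂ → ℂ,
      eLpNorm (Kzb g) (ENNReal.ofReal p) (volume.restrict unitDisk) ≤
        ENNReal.ofReal Np * eLpNorm g (ENNReal.ofReal p) (volume.restrict unitDisk))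
    (hd : ∀ n : ℕ, ∀ᵐ z ∂(volume.restrict unitDisk),
      wd (F (n + 1)) z = Kz (fun ζ => mult ω ζ * wd (F n) ζ) z)
    (hdbar : ∀ n : ℕ, ∀ᵐ z ∂(volume.restrict unitDisk),
      wdbar (F (n + 1)) z =
        mult ω z * wd (F n) z + Kzb (fun ζ => mult ω ζ * wd (F n) ζ) z) :
    ∀ n : ℕ,
      eLpNorm (wd (F (n + 1))) (ENNReal.ofReal p) (volume.restrict unitDisk) ≤
        ENNReal.ofReal Np ^ (n + 1) *
          eLpNorm (wd (F 0)) (ENNReal.ofReal p) (volume.restrict unitDisk) ∧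
      eLpNorm (wdbar (F (n + 1))) (ENNReal.ofReal p) (volume.restrict unitDisk) ≤
        (1 + ENNReal.ofReal Np) * ENNReal.ofReal Np ^ n *
          eLpNorm (wd (F 0)) (ENNReal.ofReal p) (volume.restrict unitDisk) := by
  intro n
  set μ := volume.restrict unitDisk
  set q := ENNReal.ofReal p
  set N := ENNReal.ofReal Np
  set g : ℕ → ℂ → ℂ := fun m ζ => mult ω ζ * wd (F m) ζ
  have hg : ∀ m, eLpNorm (g m) q μ ≤ eLpNorm (wd (F m)) q μ := fun m =>
    eLpNorm_mul_le_of_norm_le_one (norm_mult_le_one ω) q μ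
  have hstep : ∀ m, eLpNorm (wd (F (m + 1))) q μ ≤ N * eLpNorm (wd (F m)) q μ := fun m => by
    rw [eLpNorm_congr_ae (hd m)]
    exact (hKz (g m)).trans (mul_le_mul_right (hg m) N)
  have hpow := le_pow_mul_of_le_mul (a := fun m => eLpNorm (wd (F m)) q μ) hstep
  refine ⟨hpow (n + 1), ?_⟩
  have hg_meas : AEStronglyMeasurable (g n) μ :=
    ((measurable_mult ω).mul (measurable_wd (F n))).aestronglyMeasurable
  -- `Kzb (g n)` is not assumed measurable; it is a.e. the difference of two measurable functions.
  have hKzb_meas : AEStronglyMeasurable (Kzb (g n)) μ := by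
    refine ((measurable_wdbar (F (n + 1))).aestronglyMeasurable.sub hg_meas).congr ?_
    filter_upwards [hdbar n] with z hz
    simp only [Pi.sub_apply, hz, add_sub_cancel_left, g]
  calc eLpNorm (wdbar (F (n + 1))) q μ
      = eLpNorm (g n + Kzb (g n)) q μ := eLpNorm_congr_ae (hdbar n)
    _ ≤ eLpNorm (g n) q μ + eLpNorm (Kzb (g n)) q μ :=
        eLpNorm_add_le hg_meas hKzb_meas (ENNReal.one_le_ofReal.mpr (by linarith))
    _ ≤ eLpNorm (wd (F n)) q μ + N * eLpNorm (wd (F n)) q μ :=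
        add_le_add (hg n) ((hKzb (g n)).trans (mul_le_mul_right (hg n) N))
    _ = (1 + N) * eLpNorm (wd (F n)) q μ := by ring
    _ ≤ (1 + N) * N ^ n * eLpNorm (wd (F 0)) q μ := by
        rw [mul_assoc]
        exact mul_le_mul_right (hpow n) _

/-- with `F₀ = 𝒫[H]`, `Fₙ = 𝒦[(ω̄'/ω')∂F_{n−1}]` (`H ∈ C^α(𝕋)`,
`1/2 < α < 1`, `ω` conformal with `ω' ≠ 0`), for `2 < p < 1/(1−α)` one has, for `n ≥ 1`,
`‖∂Fₙ‖_p ≤ ‖K‖_p^n ‖∂F₀‖_p` and `‖∂̄Fₙ‖_p ≤ (1+‖K‖_p)‖K‖_p^{n−1} ‖∂F₀‖_p`.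
Here `‖K‖_p = Np` bounds the disk Beurling-type operators `Kz`, `Kzb` via which the
Wirtinger derivatives of `Fₙ` are expressed (hypotheses `hKz`, `hKzb`, `hd`, `hdbar`). -/
theorem derivative_estimates
    (α p τ : ℝ) (hα : 1 / 2 < α) (hα1 : α < 1) (hp2 : 2 < p) (hp : p < 1 / (1 - α))
    (H : ℂ → ℂ) (c : ℝ)
    (hH : ∀ ζ₁ ∈ unitCircle, ∀ ζ₂ ∈ unitCircle, ‖H ζ₁ - H ζ₂‖ ≤ c * ‖ζ₁ - ζ₂‖ ^ α)
    (ω : ℂ → ℂ) (hω : DifferentiableOn ℂ ω unitDisk)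
    (hω' : ∀ z ∈ unitDisk, deriv ω z ≠ 0)
    (F : ℕ → ℂ → ℂ)
    (hF0 : F 0 = poissonOp H)
    (hFrec : ∀ n : ℕ, F (n + 1) = greenOp (fun ζ => mult ω ζ * wd (F n) ζ))
    (Np : ℝ) (hNp : 0 ≤ Np) (Kz Kzb : (ℂ → ℂ) → (ℂ → ℂ))
    (hKz : ∀ g : ℂ → ℂ,
      eLpNorm (Kz g) (ENNReal.ofReal p) (volume.restrict unitDisk) ≤
        ENNReal.ofReal Np * eLpNorm g (ENNReal.ofReal p) (volume.restrict unitDisk))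
    (hKzb : ∀ g : ℂ → ℂ,
      eLpNorm (Kzb g) (ENNReal.ofReal p) (volume.restrict unitDisk) ≤
        ENNReal.ofReal Np * eLpNorm g (ENNReal.ofReal p) (volume.restrict unitDisk))
    (hd : ∀ n : ℕ, ∀ᵐ z ∂(volume.restrict unitDisk),
      wd (F (n + 1)) z = Kz (fun ζ => mult ω ζ * wd (F n) ζ) z)
    (hdbar : ∀ n : ℕ, ∀ᵐ z ∂(volume.restrict unitDisk),
      wdbar (F (n + 1)) z =
        mult ω z * wd (F n) z + Kzb (fun ζ => mult ω ζ * wd (F n) ζ) z) :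
    ∀ n : ℕ,
      eLpNorm (wd (F (n + 1))) (ENNReal.ofReal p) (volume.restrict unitDisk) ≤
        ENNReal.ofReal Np ^ (n + 1) *
          eLpNorm (wd (F 0)) (ENNReal.ofReal p) (volume.restrict unitDisk) ∧
      eLpNorm (wdbar (F (n + 1))) (ENNReal.ofReal p) (volume.restrict unitDisk) ≤
        (1 + ENNReal.ofReal Np) * ENNReal.ofReal Np ^ n *
          eLpNorm (wd (F 0)) (ENNReal.ofReal p) (volume.restrict unitDisk) :=
  derivative_estimates_general p hp2 ω F Np Kz Kzb hKz hKzb hd hdbar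
end
end
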